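/- Suppose the dependency digraph of a tabletop rearrangement instance with n ≥ 2 objects is strongly connected. Then the minimum number of pick-and-place actions over all plans for the instance equals n + ν, where ν is the minimum cardinality of a feedback vertex set of the dependency digraph. -/

import Mathlib

/-!
Upper bound: given a feedback vertex set `S`, park the objects of `S` at buffers far from
everything, then move the remaining objects to their goals in a topological order of the
dependency digraph with `S` removed, sinks first, so that no goal is occupied while a start it
overlaps is still occupied; finally move the parked objects to their goals. That is `n + |S|`
actions.

Lower bound: strong connectivity gives every object an in-arc, so its start and goal differ and it
is moved at least once. The objects moved at least twice form a feedback vertex set: if `i → j`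
is an arc between objects moved exactly once, then `j` is moved before `i`, since otherwise the
goal of `i` meets the start of `j` right after `i` is placed. So the time of the unique move
strictly decreases along arcs outside that set.
-/

open Metric in
/-- A configuration of `n` unit-disc objects in the plane (modeled by `ℂ`) is feasible
if the closed unit discs centered at the object positions are pairwise disjoint. -/
def FeasibleConfig {n : ℕ} (c : Fin n → ℂ) : Prop :=
  ∀ i j : Fin n, i ≠ j → Disjoint (closedBall (c i) 1) (closedBall (c j) 1)

/-- A pick-and-place action changes the position of exactly one object. -/
def PickPlace {n : ℕ} (c c' : Fin n → ℂ) : Prop :=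
  ∃ i : Fin n, c' i ≠ c i ∧ ∀ j : Fin n, j ≠ i → c' j = c j

/-- `plan`, the list of configurations resulting from the successive pick-and-place
actions, is a plan transforming the start configuration `s` into the goal
configuration `g`: each action changes the position of exactly one object, each
resulting configuration is feasible, and the final configuration is the goal.  The
number of actions of the plan is `plan.length`. -/
def IsPlan {n : ℕ} (s g : Fin n → ℂ) (plan : List (Fin n → ℂ)) : Prop :=
  List.Chain PickPlace s plan ∧ (∀ c ∈ plan, FeasibleConfig c) ∧
    (s :: plan).getLast (by simp) = g

open Metric in
/-- The dependency digraph of the instance: an arc from `i` to `j` (for `i ≠ j`) exactly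
when the closed unit disc centered at `g i` intersects the closed unit disc centered at
`s j`. -/
def DepArc {n : ℕ} (s g : Fin n → ℂ) (i j : Fin n) : Prop :=
  i ≠ j ∧ (Metric.closedBall (g i) 1 ∩ Metric.closedBall (s j) 1).Nonempty

/-- `S` is a feedback vertex set of the digraph with arc relation `A`: the subdigraph
induced on the complement of `S` contains no directed cycle (no nontrivial closed
directed walk). -/
def IsFVS {V : Type*} (A : V → V → Prop) (S : Set V) : Prop :=
  ∀ x : V, ¬ Relation.TransGen (fun u v => A u v ∧ u ∉ S ∧ v ∉ S) x x

/-- `ν(D)`: the minimum cardinality of a feedback vertex set of the digraph with vertex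
type `V` and arc relation `A`. -/
noncomputable def nuFVS {V : Type*} (A : V → V → Prop) : ℕ :=
  sInf {k | ∃ S : Set V, IsFVS A S ∧ S.ncard = k}

open Metric

lemma disjoint_closedBall_one_iff {E : Type*} [NormedAddCommGroup E] [NormedSpace ℝ E]
    {x y : E} : Disjoint (closedBall x 1) (closedBall y 1) ↔ 2 < dist x y := by
  rw [disjoint_closedBall_closedBall_iff zero_le_one zero_le_one]
  norm_num

variable {n : ℕ}

lemma feasibleConfig_iff {c : Fin n → ℂ} :
    FeasibleConfig c ↔ Pairwise fun i j => 2 < dist (c i) (c j) := by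
  simp only [FeasibleConfig, disjoint_closedBall_one_iff, Pairwise]

lemma depArc_iff {s g : Fin n → ℂ} {i j : Fin n} :
    DepArc s g i j ↔ i ≠ j ∧ dist (g i) (s j) ≤ 2 := by
  rw [DepArc, ← Set.not_disjoint_iff_nonempty_inter, disjoint_closedBall_one_iff, not_lt]

lemma exists_rel_of_forall_reflTransGen {α : Type*} [Nontrivial α] {r : α → α → Prop}
    (h : ∀ u v, Relation.ReflTransGen r u v) (v : α) : ∃ u, r u v := by
  obtain ⟨u, hu⟩ := exists_ne v
  rcases (h u v).cases_tail with rfl | ⟨w, -, hwv⟩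
  · exact absurd rfl hu
  · exact ⟨w, hwv⟩

lemma start_ne_goal_of_depArc {s g : Fin n → ℂ} (hg : FeasibleConfig g) {i j : Fin n}
    (h : DepArc s g j i) : s i ≠ g i := by
  obtain ⟨hji, hdist⟩ := depArc_iff.1 h
  intro hsg
  rw [hsg] at hdist
  exact (feasibleConfig_iff.1 hg hji).not_ge hdist

section FeedbackVertexSet

variable {V : Type*} {A : V → V → Prop} {S : Set V}

lemma isFVS_of_lt (τ : V → ℕ) (hτ : ∀ u v, A u v → u ∉ S → v ∉ S → τ v < τ u) :
    IsFVS A S := by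
  intro x hx
  have := Relation.TransGen.lift (p := (· > ·)) τ
    (fun u v ⟨huv, hu, hv⟩ => hτ u v huv hu hv) x x hx
  rw [Relation.transGen_eq_self] at this
  exact lt_irrefl _ this

lemma IsFVS.exists_sink [Finite V] (hS : IsFVS A S) {U : Set V} (hU : U.Nonempty)
    (hUS : ∀ u ∈ U, u ∉ S) : ∃ m ∈ U, ∀ j ∈ U, ¬ A m j := by
  let R := Relation.TransGen fun u v => A u v ∧ u ∉ S ∧ v ∉ S
  have : IsTrans V (flip R) := ⟨fun _ _ _ h₁ h₂ => h₂.trans h₁⟩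
  have : Std.Irrefl (flip R) := ⟨hS⟩
  obtain ⟨m, hm, hmin⟩ := (Finite.wellFounded_of_trans_of_irrefl (flip R)).has_min U hU
  exact ⟨m, hm, fun j hj hmj => hmin j hj (.single ⟨hmj, hUS m hm, hUS j hj⟩)⟩

lemma nuFVS_le (hS : IsFVS A S) : nuFVS A ≤ S.ncard :=
  Nat.sInf_le ⟨S, hS, rfl⟩

lemma exists_isFVS_ncard_eq_nuFVS (A : V → V → Prop) : ∃ S, IsFVS A S ∧ S.ncard = nuFVS A := by
  have huniv : IsFVS A Set.univ := fun _ hx => by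
    obtain ⟨_, ⟨-, hx, -⟩, -⟩ := Relation.TransGen.head'_iff.1 hx
    exact hx trivial
  exact Nat.sInf_mem (s := {k | ∃ S : Set V, IsFVS A S ∧ S.ncard = k})
    ⟨_, Set.univ, huniv, rfl⟩

end FeedbackVertexSet

def HasPlan (c d : Fin n → ℂ) (k : ℕ) : Prop :=
  ∃ plan, IsPlan c d plan ∧ plan.length = k

lemma HasPlan.refl (c : Fin n → ℂ) : HasPlan c c 0 :=
  ⟨[], ⟨.singleton c, by simp, rfl⟩, rfl⟩

lemma HasPlan.update {c : Fin n → ℂ} {i : Fin n} {x : ℂ} (hx : x ≠ c i)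
    (hfeas : FeasibleConfig (Function.update c i x)) : HasPlan c (Function.update c i x) 1 :=
  ⟨[Function.update c i x],
    ⟨.cons_cons ⟨i, by simpa using hx, fun _ hj => Function.update_of_ne hj _ _⟩ (.singleton _),
      by simpa using hfeas, rfl⟩, rfl⟩

lemma HasPlan.trans {c d e : Fin n → ℂ} {k m : ℕ} (h₁ : HasPlan c d k) (h₂ : HasPlan d e m) :
    HasPlan c e (k + m) := by
  obtain ⟨l₁, ⟨hchain₁, hfeas₁, hlast₁⟩, rfl⟩ := h₁
  obtain ⟨l₂, ⟨hchain₂, hfeas₂, hlast₂⟩, rfl⟩ := h₂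
  refine ⟨l₁ ++ l₂, ⟨?_, ?_, ?_⟩, List.length_append⟩
  · have hlast : (c :: l₁).getLast? = some d := by
      rw [List.getLast?_eq_getLast_of_ne_nil (by simp), hlast₁]
    exact List.IsChain.append (l₁ := c :: l₁) hchain₁ hchain₂.tail
      (by simpa [hlast] using hchain₂.rel_head?)
  · simpa [or_imp, forall_and] using ⟨hfeas₁, hfeas₂⟩
  · rcases l₂ with _ | ⟨x, t⟩
    · simpa [← hlast₂] using hlast₁
    · rw [← hlast₂, List.getLast_cons (by simp), List.getLast_append_of_ne_nil _ (by simp)]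
      exact (List.getLast_cons _).symm

lemma exists_seq_far_of_isBounded {K : Set ℂ} (hK : Bornology.IsBounded K) (r : ℝ) :
    ∃ b : ℕ → ℂ, (∀ i, ∀ z ∈ K, r < dist (b i) z) ∧ Pairwise fun i j => r < dist (b i) (b j) := by
  obtain ⟨R, hR0, hR⟩ := hK.subset_closedBall_lt 0 0
  obtain ⟨d, hd0, hrd⟩ : ∃ d : ℝ, 0 < d ∧ r < d :=
    ⟨|r| + 1, by positivity, by linarith [le_abs_self r]⟩
  refine ⟨fun i => ((R + d + d * i : ℝ) : ℂ), fun i z hz => ?_, fun i j hij => ?_⟩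
  · have hz : ‖z‖ ≤ R := by simpa using hR hz
    calc r < ‖((R + d + d * i : ℝ) : ℂ)‖ - ‖z‖ := by
          rw [Complex.norm_real, Real.norm_of_nonneg (by positivity)]
          nlinarith [(Nat.cast_nonneg i : (0 : ℝ) ≤ i)]
      _ ≤ dist ((R + d + d * i : ℝ) : ℂ) z := dist_eq_norm (E := ℂ) _ z ▸ norm_sub_norm_le _ _
  · calc r < d * 1 := by linarith
      _ ≤ d * dist i j := by gcongr; exact Nat.pairwise_one_le_dist hij
      _ = dist ((R + d + d * i : ℝ) : ℂ) ((R + d + d * j : ℝ) : ℂ) := by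
        rw [← Nat.dist_cast_real, Complex.isometry_ofReal.dist_eq, dist_add_left, Real.dist_eq,
          Real.dist_eq, ← mul_sub, abs_mul, abs_of_pos hd0]

section Construction

variable {s g b : Fin n → ℂ}

structure IsBuffer (s g b : Fin n → ℂ) : Prop where
  far_start : ∀ i j, 2 < dist (b i) (s j)
  far_goal : ∀ i j, 2 < dist (b i) (g j)
  pairwise : Pairwise fun i j => 2 < dist (b i) (b j)

lemma exists_isBuffer (s g : Fin n → ℂ) : ∃ b, IsBuffer s g b := by
  obtain ⟨b, hfar, hpair⟩ :=
    exists_seq_far_of_isBounded ((Set.finite_range s).union (Set.finite_range g)).isBounded 2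
  exact ⟨fun i => b i, ⟨fun i j => hfar i _ (.inl ⟨j, rfl⟩), fun i j => hfar i _ (.inr ⟨j, rfl⟩),
    hpair.comp_of_injective Fin.val_injective⟩⟩

lemma IsBuffer.ne_start (hb : IsBuffer s g b) (i j : Fin n) : b i ≠ s j :=
  dist_pos.1 (zero_lt_two.trans (hb.far_start i j))

lemma IsBuffer.ne_goal (hb : IsBuffer s g b) (i j : Fin n) : b i ≠ g j :=
  dist_pos.1 (zero_lt_two.trans (hb.far_goal i j))

lemma feasibleConfig_piecewise (hs : FeasibleConfig s) (hg : FeasibleConfig g)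
    (hb : IsBuffer s g b) {G B : Finset (Fin n)}
    (hGB : ∀ i ∈ G, ∀ j ∉ G, j ∉ B → ¬ DepArc s g i j) :
    FeasibleConfig (G.piecewise g (B.piecewise b s)) := by
  have hgs : ∀ i ∈ G, ∀ j ∉ G, j ∉ B → 2 < dist (g i) (s j) := fun i hi j hj hjB =>
    not_le.1 fun h => hGB i hi j hj hjB (depArc_iff.2 ⟨ne_of_mem_of_not_mem hi hj, h⟩)
  rw [feasibleConfig_iff]
  rw [feasibleConfig_iff] at hs hg
  intro i j hij
  by_cases hiG : i ∈ G <;> by_cases hjG : j ∈ G <;> by_cases hiB : i ∈ B <;>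
    by_cases hjB : j ∈ B <;> simp only [Finset.piecewise, hiG, hjG, hiB, hjB, if_true, if_false] <;>
    first
    | exact hg hij
    | exact hs hij
    | exact hb.pairwise hij
    | exact hb.far_start i j
    | exact hb.far_goal i j
    | exact hgs i hiG j hjG hjB
    | rw [dist_comm]
      first
      | exact hb.far_start j i
      | exact hb.far_goal j i
      | exact hgs j hjG i hiG hiB

lemma hasPlan_piecewise {p q : Fin n → ℂ} {T : Finset (Fin n)} (P : Finset (Fin n) → Prop)
    (hpq : ∀ i ∈ T, p i ≠ q i) (hfeas : ∀ A ⊆ T, P A → FeasibleConfig (A.piecewise p q))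
    (hext : ∀ A ⊂ T, P A → ∃ m ∈ T \ A, P (insert m A)) {A : Finset (Fin n)} (hAT : A ⊆ T)
    (hA : P A) : HasPlan (A.piecewise p q) (T.piecewise p q) (T \ A).card := by
  induction hk : (T \ A).card generalizing A with
  | zero =>
    obtain rfl : A = T :=
      hAT.antisymm (Finset.sdiff_eq_empty_iff_subset.1 (Finset.card_eq_zero.1 hk))
    exact .refl _
  | succ k ih =>
    have hAT' : A ⊂ T := hAT.ssubset_of_ne (by rintro rfl; simp at hk)
    obtain ⟨m, hm, hPm⟩ := hext A hAT' hA
    obtain ⟨hmT, hmA⟩ := Finset.mem_sdiff.1 hm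
    have hmAT : insert m A ⊆ T := Finset.insert_subset hmT hAT
    have hstep : HasPlan (A.piecewise p q) ((insert m A).piecewise p q) 1 := by
      rw [Finset.piecewise_insert]
      refine .update ?_ ?_
      · rw [Finset.piecewise_eq_of_notMem _ _ _ hmA]
        exact hpq m hmT
      · rw [← Finset.piecewise_insert]
        exact hfeas _ hmAT hPm
    have hrest := ih hmAT hPm (by rw [Finset.sdiff_insert, Finset.card_erase_of_mem hm, hk]; rfl)
    simpa only [add_comm] using hstep.trans hrest

variable (hs : FeasibleConfig s) (hg : FeasibleConfig g) (hb : IsBuffer s g b)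
include hs hg hb

lemma hasPlan_park (S : Finset (Fin n)) : HasPlan s (S.piecewise b s) S.card := by
  have hfeas : ∀ A : Finset (Fin n), FeasibleConfig (A.piecewise b s) := fun A => by
    simpa using feasibleConfig_piecewise hs hg hb (G := ∅) (B := A) (by simp)
  simpa using hasPlan_piecewise (fun _ => True) (fun i _ => hb.ne_start i i)
    (fun A _ _ => hfeas A) (fun _ hA _ => by simpa using Finset.exists_of_ssubset hA)
    (Finset.empty_subset S) trivial

lemma hasPlan_unpark (S : Finset (Fin n)) : HasPlan (Sᶜ.piecewise g b) g S.card := by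
  have hfeas : ∀ A : Finset (Fin n), FeasibleConfig (A.piecewise g b) := fun A => by
    simpa using feasibleConfig_piecewise hs hg hb (G := A) (B := Finset.univ) (by simp)
  simpa using hasPlan_piecewise (fun _ => True) (fun i _ => (hb.ne_goal i i).symm)
    (fun A _ _ => hfeas A) (fun _ hA _ => by simpa using Finset.exists_of_ssubset hA)
    (Finset.subset_univ Sᶜ) trivial

lemma hasPlan_place (hsg : ∀ i, s i ≠ g i) {S : Finset (Fin n)} (hS : IsFVS (DepArc s g) ↑S) :
    HasPlan (S.piecewise b s) (Sᶜ.piecewise g b) Sᶜ.card := by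
  let P : Finset (Fin n) → Prop := fun A => ∀ i ∈ A, ∀ j ∈ Sᶜ \ A, ¬ DepArc s g i j
  have hext : ∀ A ⊂ Sᶜ, P A → ∃ m ∈ Sᶜ \ A, P (insert m A) := by
    intro A hA hPA
    obtain ⟨m, hm, hsink⟩ := hS.exists_sink (U := ↑(Sᶜ \ A))
      (Finset.coe_nonempty.2 (Finset.sdiff_nonempty.2 (not_subset_of_ssubset hA)))
      (fun u hu => by simpa using (Finset.mem_sdiff.1 hu).1)
    refine ⟨m, hm, fun i hi j hj => ?_⟩
    have hj' : j ∈ Sᶜ \ A := by simp_all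
    rcases Finset.mem_insert.1 hi with rfl | hi
    · exact hsink j hj'
    · exact hPA i hi j hj'
  have hfeas : ∀ A ⊆ Sᶜ, P A → FeasibleConfig (A.piecewise g (S.piecewise b s)) :=
    fun A _ hPA => feasibleConfig_piecewise hs hg hb fun i hi j hjA hjS =>
      hPA i hi j (by simp [hjA, hjS])
  have hend : Sᶜ.piecewise g (S.piecewise b s) = Sᶜ.piecewise g b := by
    ext i
    by_cases hi : i ∈ S <;> simp [hi]
  have hpq : ∀ i ∈ Sᶜ, g i ≠ S.piecewise b s i := fun i hi => by
    simpa [Finset.mem_compl.1 hi] using (hsg i).symm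
  simpa [hend] using hasPlan_piecewise P hpq hfeas hext (Finset.empty_subset _) (by simp [P])

end Construction

lemma hasPlan_of_isFVS {s g : Fin n → ℂ} (hs : FeasibleConfig s) (hg : FeasibleConfig g)
    (hsg : ∀ i, s i ≠ g i) {S : Finset (Fin n)} (hS : IsFVS (DepArc s g) ↑S) :
    HasPlan s g (n + S.card) := by
  obtain ⟨b, hb⟩ := exists_isBuffer s g
  have := ((hasPlan_park hs hg hb S).trans (hasPlan_place hs hg hb hsg hS)).trans
    (hasPlan_unpark hs hg hb S)
  have hSn : S.card ≤ n := by simpa using S.card_le_univ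
  convert this using 1
  rw [Finset.card_compl, Fintype.card_fin]
  omega

section Moves

variable {ι α : Type*} [DecidableEq α] {c : ℕ → ι → α} {L : ℕ} {i : ι}

def moveTimes (c : ℕ → ι → α) (L : ℕ) (i : ι) : Finset ℕ :=
  (Finset.range L).filter fun t => c (t + 1) i ≠ c t i

lemma mem_moveTimes {t : ℕ} : t ∈ moveTimes c L i ↔ t < L ∧ c (t + 1) i ≠ c t i := by
  simp [moveTimes]

lemma apply_eq_of_forall_notMem_moveTimes {a b : ℕ} (hab : a ≤ b) (hbL : b ≤ L)
    (h : ∀ t, a ≤ t → t < b → t ∉ moveTimes c L i) : c b i = c a i := by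
  induction b, hab using Nat.le_induction with
  | base => rfl
  | succ b hab ih =>
    rw [← ih (by omega) fun t h₁ h₂ => h t h₁ (by omega)]
    by_contra hne
    exact h b hab (by omega) (mem_moveTimes.2 ⟨by omega, hne⟩)

lemma moveTimes_nonempty (h : c 0 i ≠ c L i) : (moveTimes c L i).Nonempty := by
  rw [Finset.nonempty_iff_ne_empty]
  intro hempty
  exact h (apply_eq_of_forall_notMem_moveTimes L.zero_le le_rfl (by simp [hempty])).symm

lemma apply_eq_initial_of_moveTimes_eq_singleton {τ t : ℕ} (h : moveTimes c L i = {τ})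
    (ht : t ≤ τ) : c t i = c 0 i := by
  have hτL := (mem_moveTimes.1 (h ▸ Finset.mem_singleton_self τ)).1
  exact apply_eq_of_forall_notMem_moveTimes (L := L) t.zero_le (by omega) fun u _ hu => by
    rw [h, Finset.mem_singleton]; omega

lemma apply_eq_final_of_moveTimes_eq_singleton {τ t : ℕ} (h : moveTimes c L i = {τ})
    (ht : τ < t) (htL : t ≤ L) : c t i = c L i :=
  (apply_eq_of_forall_notMem_moveTimes htL le_rfl fun u hu _ => by
    rw [h, Finset.mem_singleton]; omega).symm

end Moves

section LowerBound

lemma PickPlace.eq_of_ne {c c' : Fin n → ℂ} (h : PickPlace c c') {i j : Fin n}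
    (hi : c' i ≠ c i) (hj : c' j ≠ c j) : i = j := by
  obtain ⟨k, -, hk⟩ := h
  exact (not_imp_comm.1 (hk i) hi).trans (not_imp_comm.1 (hk j) hj).symm

lemma PickPlace.card_filter_ne {c c' : Fin n → ℂ} (h : PickPlace c c') :
    (Finset.univ.filter fun j => c' j ≠ c j).card = 1 := by
  obtain ⟨k, hk, -⟩ := id h
  exact Finset.card_eq_one.2 ⟨k, Finset.eq_singleton_iff_unique_mem.2
    ⟨by simpa using hk, fun j hj => h.eq_of_ne (by simpa using hj) hk⟩⟩

variable {s g : Fin n → ℂ} {c : ℕ → Fin n → ℂ} {L : ℕ}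

lemma sum_card_moveTimes (hmove : ∀ t < L, PickPlace (c t) (c (t + 1))) :
    ∑ i, (moveTimes c L i).card = L := by
  calc ∑ i, (moveTimes c L i).card
      = ∑ t ∈ Finset.range L, (Finset.univ.filter fun i => c (t + 1) i ≠ c t i).card := by
        simp only [moveTimes, Finset.card_filter]
        exact Finset.sum_comm
    _ = ∑ t ∈ Finset.range L, 1 :=
        Finset.sum_congr rfl fun t ht => (hmove t (Finset.mem_range.1 ht)).card_filter_ne
    _ = L := by simp

lemma lt_of_depArc_of_moveTimes_eq_singleton (hc₀ : c 0 = s) (hcL : c L = g)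
    (hmove : ∀ t < L, PickPlace (c t) (c (t + 1)))
    (hfeas : ∀ t, 1 ≤ t → t ≤ L → FeasibleConfig (c t)) {i j : Fin n} {τi τj : ℕ}
    (hi : moveTimes c L i = {τi}) (hj : moveTimes c L j = {τj}) (hij : DepArc s g i j) :
    τj < τi := by
  obtain ⟨hne, hdist⟩ := depArc_iff.1 hij
  obtain ⟨hτiL, hmovei⟩ := mem_moveTimes.1 (hi ▸ Finset.mem_singleton_self τi)
  obtain ⟨hτjL, hmovej⟩ := mem_moveTimes.1 (hj ▸ Finset.mem_singleton_self τj)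
  by_contra! hle
  have hlt : τi < τj := hle.lt_of_ne fun h => hne ((hmove τi hτiL).eq_of_ne hmovei (h ▸ hmovej))
  have hci : c (τi + 1) i = g i :=
    hcL ▸ apply_eq_final_of_moveTimes_eq_singleton hi (by omega) (by omega)
  have hcj : c (τi + 1) j = s j :=
    hc₀ ▸ apply_eq_initial_of_moveTimes_eq_singleton hj (by omega)
  have : 2 < dist (c (τi + 1) i) (c (τi + 1) j) :=
    feasibleConfig_iff.1 (hfeas (τi + 1) (by omega) (by omega)) hne
  rw [hci, hcj] at this
  linarith

lemma add_nuFVS_le (hsg : ∀ i, s i ≠ g i) (hc₀ : c 0 = s) (hcL : c L = g)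
    (hmove : ∀ t < L, PickPlace (c t) (c (t + 1)))
    (hfeas : ∀ t, 1 ≤ t → t ≤ L → FeasibleConfig (c t)) :
    n + nuFVS (DepArc s g) ≤ L := by
  let S := Finset.univ.filter fun i => 2 ≤ (moveTimes c L i).card
  have hpos : ∀ i, 0 < (moveTimes c L i).card := fun i =>
    (moveTimes_nonempty (by rw [hc₀, hcL]; exact hsg i)).card_pos
  have hsingle : ∀ i ∉ S, ∃ τ, moveTimes c L i = {τ} := fun i hi => by
    simp only [S, Finset.mem_filter, Finset.mem_univ, true_and, not_le] at hi
    exact Finset.card_eq_one.1 (by have := hpos i; omega)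
  choose! τ hτ using hsingle
  have hS : IsFVS (DepArc s g) ↑S := isFVS_of_lt τ fun i j hij hi hj =>
    lt_of_depArc_of_moveTimes_eq_singleton hc₀ hcL hmove hfeas (hτ i hi) (hτ j hj) hij
  calc n + nuFVS (DepArc s g)
      ≤ n + S.card := by simpa using nuFVS_le hS
    _ = ∑ i, (1 + if i ∈ S then 1 else 0) := by simp [Finset.sum_add_distrib]
    _ ≤ ∑ i, (moveTimes c L i).card := Finset.sum_le_sum fun i _ => by
        split_ifs with hi
        · simpa [S] using hi
        · exact hpos i
    _ = L := sum_card_moveTimes hmove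

lemma IsPlan.add_nuFVS_le_length (hsg : ∀ i, s i ≠ g i) {plan : List (Fin n → ℂ)}
    (hplan : IsPlan s g plan) : n + nuFVS (DepArc s g) ≤ plan.length := by
  obtain ⟨hchain, hfeas, hlast⟩ := hplan
  have hget : ∀ t (ht : t < plan.length + 1), (s :: plan).getD t g = (s :: plan)[t] :=
    fun t ht => List.getD_eq_getElem _ _ ht
  refine add_nuFVS_le (c := fun t => (s :: plan).getD t g) hsg rfl ?_ ?_ ?_
  · rw [hget _ (by simp), ← hlast, List.getLast_eq_getElem]
    rfl
  · intro t ht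
    rw [hget t (by omega), hget (t + 1) (by omega)]
    exact List.isChain_iff_getElem.1 hchain t (by simp; omega)
  · intro t ht₁ ht₂
    obtain ⟨u, rfl⟩ := Nat.exists_eq_add_of_le' ht₁
    rw [hget _ (by omega)]
    exact hfeas _ (List.getElem_mem _)

end LowerBound

open Metric in
/-- If the dependency digraph of a tabletop rearrangement instance with `n ≥ 2` objects
is strongly connected, then the minimum number of pick-and-place actions over all plans
equals `n + ν`, where `ν` is the minimum cardinality of a feedback vertex set of the
dependency digraph. -/
theorem stmt_15 {n : ℕ} (hn : 2 ≤ n) (s g : Fin n → ℂ)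
    (hs : ∀ i j : Fin n, i ≠ j → Disjoint (closedBall (s i) 1) (closedBall (s j) 1))
    (hg : ∀ i j : Fin n, i ≠ j → Disjoint (closedBall (g i) 1) (closedBall (g j) 1))
    (hsc : ∀ u v : Fin n, Relation.ReflTransGen (DepArc s g) u v) :
    IsLeast {k : ℕ | ∃ plan : List (Fin n → ℂ), IsPlan s g plan ∧ plan.length = k}
      (n + nuFVS (DepArc s g)) := by
  have : Nontrivial (Fin n) := Fin.nontrivial_iff_two_le.2 hn
  have hsg : ∀ i, s i ≠ g i := fun i =>
    have ⟨_, hji⟩ := exists_rel_of_forall_reflTransGen hsc i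
    start_ne_goal_of_depArc hg hji
  refine ⟨?_, fun k ⟨plan, hplan, hk⟩ => hk ▸ hplan.add_nuFVS_le_length hsg⟩
  obtain ⟨S, hS, hcard⟩ := exists_isFVS_ncard_eq_nuFVS (DepArc s g)
  rw [← hcard, Set.ncard_eq_toFinset_card S]
  exact hasPlan_of_isFVS hs hg hsg (by simpa using hS)
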